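/- Let Q ∈ ℝⁿˣⁿ be symmetric, c, a₁, …, a_m ∈ ℝⁿ, b_i, l_i, u_i ∈ ℝ with l_i ≤ u_i, σ > 0 and p > 2. Consider the extended p-regularized subproblem (p-RS_m): minimize (1/2) xᵀQx + cᵀx + (σ/p) ‖x‖^p over x ∈ ℝⁿ subject to l_i ≤ a_iᵀx + b_i ≤ u_i for i = 1, …, m; and its relaxation: minimize (1/2) xᵀ(Q − λ_min(Q) I_n) x + cᵀx + (σ/p) t^{p/2} + (λ_min(Q)/2) t over (x, t) ∈ ℝⁿ × ℝ subject to l_i ≤ a_iᵀx + b_i ≤ u_i for i = 1, …, m and xᵀx ≤ t. Suppose the dimension of the span of span{a₁, …, a_m} ∪ R(Q − λ_min(Q) I_n) is at most n − 1. Then x* is a global minimizer of (p-RS_m) if and only if (x*, x*ᵀx*) is a global minimizer of the relaxation. -/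

import Mathlib

/-!
The dimension bound leaves a direction `d ≠ 0` orthogonal to every `aᵢ` and to the range of
`M = Q - λ_min I`; moving along `d` changes neither the constraints nor `xᵀ M x`, only `xᵀx`
and the linear term. Given a feasible `(x, t)` of the relaxation, choose
`s` with `‖x + s d‖² = t` and `s (cᵀd) ≤ 0` (the two roots of this quadratic in `s` have
opposite signs); then `x + s d` is feasible for (p-RS_m) with objective at most the relaxed
objective of `(x, t)`. Since `xᵀQx = xᵀMx + λ_min xᵀx`, the relaxed objective at `(x, xᵀx)`
is the original one, and both implications follow.
-/

open Matrix

theorem Matrix.exists_ne_zero_forall_dotProduct_eq_zero {K ι : Type*} [Field K] [Fintype ι]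
    [DecidableEq ι] (V : Submodule K (ι → K)) (hV : Module.finrank K V < Fintype.card ι) :
    ∃ d : ι → K, d ≠ 0 ∧ ∀ w ∈ V, d ⬝ᵥ w = 0 := by
  have hlt : V < ⊤ := Submodule.lt_top_of_finrank_lt_finrank (by simpa using hV)
  obtain ⟨f, hf, hVf⟩ := V.exists_le_ker_of_lt_top hlt
  obtain ⟨d, rfl⟩ := (dotProductEquiv K ι).surjective f
  exact ⟨d, by simpa using hf, fun w hw => by simpa using hVf hw⟩

theorem Matrix.mulVec_eq_zero_of_forall_dotProduct_mulVec_eq_zero {R ι : Type*} [CommRing R]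
    [Fintype ι] [DecidableEq ι] {M : Matrix ι ι R} (hM : M.IsSymm) {d : ι → R}
    (hd : ∀ v, d ⬝ᵥ (M *ᵥ v) = 0) : M *ᵥ d = 0 := by
  rw [← vecMul_transpose, hM.eq]
  ext i
  simpa only [dotProduct_mulVec, dotProduct_single, mul_one, Pi.zero_apply] using hd (Pi.single i 1)

theorem Matrix.add_smul_dotProduct_mulVec_add_smul {R ι : Type*} [CommRing R] [Fintype ι]
    [DecidableEq ι] {M : Matrix ι ι R} (hM : M.IsSymm) {d : ι → R}
    (hd : ∀ v, d ⬝ᵥ (M *ᵥ v) = 0) (x : ι → R) (s : R) :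
    (x + s • d) ⬝ᵥ (M *ᵥ (x + s • d)) = x ⬝ᵥ (M *ᵥ x) := by
  simp [mulVec_add, mulVec_smul, mulVec_eq_zero_of_forall_dotProduct_mulVec_eq_zero hM hd,
    add_dotProduct, smul_dotProduct, hd]

theorem exists_quadratic_root_mul_nonpos {D B C : ℝ} (hD : 0 < D) (hC : C ≤ 0) (k : ℝ) :
    ∃ s : ℝ, D * s ^ 2 + 2 * B * s + C = 0 ∧ s * k ≤ 0 := by
  set r := Real.sqrt (B ^ 2 - D * C)
  have hr2 : r ^ 2 = B ^ 2 - D * C := Real.sq_sqrt (by nlinarith [sq_nonneg B])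
  have hBr : |B| ≤ r := Real.abs_le_sqrt (by nlinarith)
  rcases le_total 0 k with hk | hk
  · refine ⟨(-B - r) / D, by field_simp; nlinarith, ?_⟩
    exact mul_nonpos_of_nonpos_of_nonneg (div_nonpos_of_nonpos_of_nonneg
      (by linarith [neg_abs_le B]) hD.le) hk
  · refine ⟨(-B + r) / D, by field_simp; nlinarith, ?_⟩
    exact mul_nonpos_of_nonneg_of_nonpos (div_nonneg (by linarith [le_abs_self B]) hD.le) hk

theorem exists_dotProduct_self_add_smul_eq {ι : Type*} [Fintype ι] {d : ι → ℝ} (hd : d ≠ 0)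
    {x : ι → ℝ} {t : ℝ} (hxt : x ⬝ᵥ x ≤ t) (k : ℝ) :
    ∃ s : ℝ, (x + s • d) ⬝ᵥ (x + s • d) = t ∧ s * k ≤ 0 := by
  have hD : 0 < d ⬝ᵥ d := by simpa using (dotProduct_self_star_pos_iff (v := d)).mpr hd
  obtain ⟨s, hs, hsk⟩ := exists_quadratic_root_mul_nonpos (B := x ⬝ᵥ d) hD
    (sub_nonpos.mpr hxt) k
  refine ⟨s, ?_, hsk⟩
  simp only [dotProduct_add, add_dotProduct, dotProduct_smul, smul_dotProduct, smul_eq_mul,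
    dotProduct_comm d x]
  linarith

section Problem

variable {ι κ : Type*} [Fintype ι]

def IsFeasible (a : κ → ι → ℝ) (b l u : κ → ℝ) (x : ι → ℝ) : Prop :=
  ∀ i, l i ≤ a i ⬝ᵥ x + b i ∧ a i ⬝ᵥ x + b i ≤ u i

noncomputable def pRSObjective (Q : Matrix ι ι ℝ) (c : ι → ℝ) (σ p : ℝ) (x : ι → ℝ) : ℝ :=
  1 / 2 * (x ⬝ᵥ (Q *ᵥ x)) + c ⬝ᵥ x + σ / p * (x ⬝ᵥ x) ^ (p / 2)

noncomputable def relaxedObjective [DecidableEq ι] (Q : Matrix ι ι ℝ) (lmin : ℝ) (c : ι → ℝ)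
    (σ p : ℝ) (x : ι → ℝ) (t : ℝ) : ℝ :=
  1 / 2 * (x ⬝ᵥ ((Q - lmin • 1) *ᵥ x)) + c ⬝ᵥ x + σ / p * t ^ (p / 2) + lmin / 2 * t

theorem isFeasible_add_smul_iff {a : κ → ι → ℝ} {b l u : κ → ℝ} {d : ι → ℝ}
    (ha : ∀ i, a i ⬝ᵥ d = 0) (x : ι → ℝ) (s : ℝ) :
    IsFeasible a b l u (x + s • d) ↔ IsFeasible a b l u x := by
  simp [IsFeasible, dotProduct_add, dotProduct_smul, ha]

variable [DecidableEq ι]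

theorem relaxedObjective_dotProduct_self (Q : Matrix ι ι ℝ) (lmin : ℝ) (c : ι → ℝ) (σ p : ℝ)
    (x : ι → ℝ) : relaxedObjective Q lmin c σ p x (x ⬝ᵥ x) = pRSObjective Q c σ p x := by
  simp only [relaxedObjective, pRSObjective, sub_mulVec, smul_mulVec, one_mulVec,
    dotProduct_sub, dotProduct_smul, smul_eq_mul]
  ring

theorem relaxedObjective_add_smul {Q : Matrix ι ι ℝ} {lmin : ℝ} (c : ι → ℝ) (σ p : ℝ)
    (hQ : (Q - lmin • 1).IsSymm) {d : ι → ℝ} (hd : ∀ v, d ⬝ᵥ ((Q - lmin • 1) *ᵥ v) = 0)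
    (x : ι → ℝ) (s t : ℝ) :
    relaxedObjective Q lmin c σ p (x + s • d) t =
      relaxedObjective Q lmin c σ p x t + s * (c ⬝ᵥ d) := by
  simp only [relaxedObjective, add_smul_dotProduct_mulVec_add_smul hQ hd, dotProduct_add,
    dotProduct_smul, smul_eq_mul]
  ring

theorem relaxedObjective_le_of_forall_pRSObjective_le {Q : Matrix ι ι ℝ} {lmin : ℝ}
    {a : κ → ι → ℝ} {b l u : κ → ℝ} {c : ι → ℝ} {σ p : ℝ} (hQ : (Q - lmin • 1).IsSymm)
    {d : ι → ℝ} (hd0 : d ≠ 0) (ha : ∀ i, a i ⬝ᵥ d = 0)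
    (hd : ∀ v, d ⬝ᵥ ((Q - lmin • 1) *ᵥ v) = 0) {xs : ι → ℝ}
    (hmin : ∀ x, IsFeasible a b l u x → pRSObjective Q c σ p xs ≤ pRSObjective Q c σ p x)
    {x : ι → ℝ} {t : ℝ} (hx : IsFeasible a b l u x) (hxt : x ⬝ᵥ x ≤ t) :
    relaxedObjective Q lmin c σ p xs (xs ⬝ᵥ xs) ≤ relaxedObjective Q lmin c σ p x t := by
  obtain ⟨s, hs, hsc⟩ := exists_dotProduct_self_add_smul_eq hd0 hxt (c ⬝ᵥ d)
  calc relaxedObjective Q lmin c σ p xs (xs ⬝ᵥ xs) = pRSObjective Q c σ p xs :=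
        relaxedObjective_dotProduct_self ..
    _ ≤ pRSObjective Q c σ p (x + s • d) := hmin _ ((isFeasible_add_smul_iff ha x s).2 hx)
    _ = relaxedObjective Q lmin c σ p x t + s * (c ⬝ᵥ d) := by
        rw [← relaxedObjective_dotProduct_self, hs, relaxedObjective_add_smul c σ p hQ hd]
    _ ≤ relaxedObjective Q lmin c σ p x t := by linarith

end Problem

theorem stmt13_general (n m : ℕ) (Q : Matrix (Fin n) (Fin n) ℝ) (hQsymm : Q.IsSymm) (lmin : ℝ)
    (hlmin : IsGreatest {c : ℝ | (Q - c • (1 : Matrix (Fin n) (Fin n) ℝ)).PosSemidef} lmin)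
    (c : Fin n → ℝ) (a : Fin m → Fin n → ℝ) (b l u : Fin m → ℝ)
    (σ : ℝ) (p : ℝ)
    (hdim : Module.finrank ℝ
      ↥(Submodule.span ℝ (Set.range a) ⊔
          LinearMap.range (Q - lmin • (1 : Matrix (Fin n) (Fin n) ℝ)).mulVecLin) ≤ n - 1)
    (xs : Fin n → ℝ) :
    -- `xs` globally solves (p-RS_m)
    ((∀ i, l i ≤ a i ⬝ᵥ xs + b i ∧ a i ⬝ᵥ xs + b i ≤ u i) ∧
      (∀ x : Fin n → ℝ, (∀ i, l i ≤ a i ⬝ᵥ x + b i ∧ a i ⬝ᵥ x + b i ≤ u i) →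
        (1 / 2) * (xs ⬝ᵥ (Q *ᵥ xs)) + c ⬝ᵥ xs + (σ / p) * (xs ⬝ᵥ xs) ^ (p / 2) ≤
          (1 / 2) * (x ⬝ᵥ (Q *ᵥ x)) + c ⬝ᵥ x + (σ / p) * (x ⬝ᵥ x) ^ (p / 2))) ↔
    -- `(xs, xsᵀxs)` globally solves the relaxation
    (((∀ i, l i ≤ a i ⬝ᵥ xs + b i ∧ a i ⬝ᵥ xs + b i ≤ u i) ∧ xs ⬝ᵥ xs ≤ xs ⬝ᵥ xs) ∧
      (∀ (x : Fin n → ℝ) (t : ℝ),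
        ((∀ i, l i ≤ a i ⬝ᵥ x + b i ∧ a i ⬝ᵥ x + b i ≤ u i) ∧ x ⬝ᵥ x ≤ t) →
        (1 / 2) * (xs ⬝ᵥ ((Q - lmin • (1 : Matrix (Fin n) (Fin n) ℝ)) *ᵥ xs)) + c ⬝ᵥ xs
            + (σ / p) * (xs ⬝ᵥ xs) ^ (p / 2) + (lmin / 2) * (xs ⬝ᵥ xs) ≤
          (1 / 2) * (x ⬝ᵥ ((Q - lmin • (1 : Matrix (Fin n) (Fin n) ℝ)) *ᵥ x)) + c ⬝ᵥ x
            + (σ / p) * t ^ (p / 2) + (lmin / 2) * t)) := by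
  have hn : 0 < n := Nat.pos_of_ne_zero fun hn0 => by
    subst hn0
    have := hlmin.2 (show (Q - (lmin + 1) • 1).PosSemidef from
      Subsingleton.elim 0 (Q - (lmin + 1) • 1) ▸ PosSemidef.zero)
    linarith
  obtain ⟨d, hd0, hd⟩ := exists_ne_zero_forall_dotProduct_eq_zero
    (Submodule.span ℝ (Set.range a) ⊔ LinearMap.range (Q - lmin • 1).mulVecLin)
    (by simpa using hdim.trans_lt (Nat.sub_lt hn one_pos))
  have ha : ∀ i, a i ⬝ᵥ d = 0 := fun i => by
    rw [dotProduct_comm]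
    exact hd _ (Submodule.mem_sup_left (Submodule.subset_span ⟨i, rfl⟩))
  have hM : ∀ v, d ⬝ᵥ ((Q - lmin • 1) *ᵥ v) = 0 := fun v =>
    hd _ (Submodule.mem_sup_right (LinearMap.mem_range_self (Q - lmin • 1).mulVecLin v))
  have hMsymm : (Q - lmin • (1 : Matrix (Fin n) (Fin n) ℝ)).IsSymm :=
    hQsymm.sub (isSymm_one.smul lmin)
  change (IsFeasible a b l u xs ∧ ∀ x, IsFeasible a b l u x →
      pRSObjective Q c σ p xs ≤ pRSObjective Q c σ p x) ↔
    ((IsFeasible a b l u xs ∧ xs ⬝ᵥ xs ≤ xs ⬝ᵥ xs) ∧ ∀ x t, IsFeasible a b l u x ∧ x ⬝ᵥ x ≤ t →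
      relaxedObjective Q lmin c σ p xs (xs ⬝ᵥ xs) ≤ relaxedObjective Q lmin c σ p x t)
  constructor
  · rintro ⟨hxs, hmin⟩
    exact ⟨⟨hxs, le_rfl⟩, fun x t ⟨hx, hxt⟩ =>
      relaxedObjective_le_of_forall_pRSObjective_le hMsymm hd0 ha hM hmin hx hxt⟩
  · rintro ⟨⟨hxs, -⟩, hmin⟩
    refine ⟨hxs, fun x hx => ?_⟩
    simpa only [relaxedObjective_dotProduct_self] using hmin x (x ⬝ᵥ x) ⟨hx, le_rfl⟩

/-- equivalence of global minimizers of the extended p-regularized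
subproblem (p-RS_m) and its convex relaxation, under the dimension condition.
`lmin` is the smallest eigenvalue of `Q`, and `‖x‖^p = (xᵀx)^(p/2)` (real power). -/
theorem stmt13 (n m : ℕ) (Q : Matrix (Fin n) (Fin n) ℝ) (hQsymm : Q.IsSymm) (lmin : ℝ)
    (hlmin : IsGreatest {c : ℝ | (Q - c • (1 : Matrix (Fin n) (Fin n) ℝ)).PosSemidef} lmin)
    (c : Fin n → ℝ) (a : Fin m → Fin n → ℝ) (b l u : Fin m → ℝ) (hlu : ∀ i, l i ≤ u i)
    (σ : ℝ) (hσ : 0 < σ) (p : ℝ) (hp : 2 < p)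
    (hdim : Module.finrank ℝ
      ↥(Submodule.span ℝ (Set.range a) ⊔
          LinearMap.range (Q - lmin • (1 : Matrix (Fin n) (Fin n) ℝ)).mulVecLin) ≤ n - 1)
    (xs : Fin n → ℝ) :
    -- `xs` globally solves (p-RS_m)
    ((∀ i, l i ≤ a i ⬝ᵥ xs + b i ∧ a i ⬝ᵥ xs + b i ≤ u i) ∧
      (∀ x : Fin n → ℝ, (∀ i, l i ≤ a i ⬝ᵥ x + b i ∧ a i ⬝ᵥ x + b i ≤ u i) →
        (1 / 2) * (xs ⬝ᵥ (Q *ᵥ xs)) + c ⬝ᵥ xs + (σ / p) * (xs ⬝ᵥ xs) ^ (p / 2) ≤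
          (1 / 2) * (x ⬝ᵥ (Q *ᵥ x)) + c ⬝ᵥ x + (σ / p) * (x ⬝ᵥ x) ^ (p / 2))) ↔
    -- `(xs, xsᵀxs)` globally solves the relaxation
    (((∀ i, l i ≤ a i ⬝ᵥ xs + b i ∧ a i ⬝ᵥ xs + b i ≤ u i) ∧ xs ⬝ᵥ xs ≤ xs ⬝ᵥ xs) ∧
      (∀ (x : Fin n → ℝ) (t : ℝ),
        ((∀ i, l i ≤ a i ⬝ᵥ x + b i ∧ a i ⬝ᵥ x + b i ≤ u i) ∧ x ⬝ᵥ x ≤ t) →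
        (1 / 2) * (xs ⬝ᵥ ((Q - lmin • (1 : Matrix (Fin n) (Fin n) ℝ)) *ᵥ xs)) + c ⬝ᵥ xs
            + (σ / p) * (xs ⬝ᵥ xs) ^ (p / 2) + (lmin / 2) * (xs ⬝ᵥ xs) ≤
          (1 / 2) * (x ⬝ᵥ ((Q - lmin • (1 : Matrix (Fin n) (Fin n) ℝ)) *ᵥ x)) + c ⬝ᵥ x
            + (σ / p) * t ^ (p / 2) + (lmin / 2) * t)) :=
  stmt13_general n m Q hQsymm lmin hlmin c a b l u σ p hdim xs
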